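/- Discrete Gronwall lemma with weakly singular kernel: Let T > 0, N ∈ ℕ, k = T/N, t_n = n·k. If nonnegative reals φ_1,...,φ_N satisfy φ_n ≤ M_0·(1 + t_n^{-1+μ}) + M_1·k·∑_{j=1}^{n-1} t_{n-j}^{-1+ν}·φ_j for all 1 ≤ n ≤ N, where M_0, M_1 ≥ 0 and μ, ν > 0, then there exists a constant M_2 depending only on μ, ν, M_1, T (but not on N, k, or M_0) such that φ_n ≤ M_0·M_2·(1 + t_n^{-1+μ}) for all 1 ≤ n ≤ N. -/

import Mathlib

/-!
Measure `φ` in the exponentially weighted norm `max_n φ_n e^{-ℓ t_n} / (1 + t_n^{μ-1})`.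
Writing `β = min ν 1`, the exponential absorbs half of the kernel's integrability,
`t^{ν-1} e^{-ℓ t} ≲ ℓ^{-β/2} t^{β/2-1}` on `(0, T]`, and the discrete Beta estimate
`k ∑ t_{n-j}^{γ-1} t_j^{α-1} ≲ t_n^{α+γ-1}` (for `α, γ ∈ (0, 1]`) then bounds the weighted
convolution of the kernel with `1 + t^{μ-1}` by `C ℓ^{-β/2} (1 + t_n^{μ-1})`, uniformly in the
step `k`. For `ℓ` large the right-hand side of the recursion is thus a contraction by `1/2` in
the weighted norm, and strong induction on `n` gives `φ_n ≤ 2 M₀ e^{ℓ t_n} (1 + t_n^{μ-1})`.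
-/

open Finset Real

theorem rpow_le_exp {x γ : ℝ} (hx : 0 ≤ x) (hγ₀ : 0 ≤ γ) (hγ₁ : γ ≤ 1) : x ^ γ ≤ exp x :=
  calc x ^ γ ≤ (1 + x) ^ γ := by gcongr; linarith
    _ ≤ 1 + γ * x := rpow_one_add_le_one_add_mul_self (by linarith) hγ₀ hγ₁
    _ ≤ x + 1 := by nlinarith
    _ ≤ exp x := add_one_le_exp x

theorem rpow_div_exp_mul_le {t ℓ p γ : ℝ} (ht : 0 < t) (hℓ : 0 < ℓ) (hγ₀ : 0 ≤ γ) (hγ₁ : γ ≤ 1) :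
    t ^ p / exp (ℓ * t) ≤ ℓ ^ (-γ) * t ^ (p - γ) := by
  rw [div_le_iff₀ (exp_pos _)]
  calc t ^ p = ℓ ^ (-γ) * t ^ (p - γ) * (ℓ * t) ^ γ := by
        rw [mul_rpow hℓ.le ht.le, rpow_neg hℓ.le, rpow_sub ht]
        field_simp
    _ ≤ ℓ ^ (-γ) * t ^ (p - γ) * exp (ℓ * t) := by
        gcongr
        exact rpow_le_exp (by positivity) hγ₀ hγ₁

theorem rpow_le_rpow_sub_mul_rpow {t T p q : ℝ} (ht : 0 < t) (htT : t ≤ T) (hpq : p ≤ q) :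
    t ^ q ≤ T ^ (q - p) * t ^ p :=
  calc t ^ q = t ^ (q - p) * t ^ p := by rw [← rpow_add ht, sub_add_cancel]
    _ ≤ T ^ (q - p) * t ^ p := by gcongr

theorem mul_rpow_sub_one_mul_sub_le_rpow_sub_rpow {a b p : ℝ} (ha : 0 ≤ a) (hb : 0 < b)
    (hp₀ : 0 ≤ p) (hp₁ : p ≤ 1) :
    p * b ^ (p - 1) * (b - a) ≤ b ^ p - a ^ p := by
  have bernoulli : (1 + (a / b - 1)) ^ p ≤ 1 + p * (a / b - 1) :=
    rpow_one_add_le_one_add_mul_self (by linarith [div_nonneg ha hb.le]) hp₀ hp₁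
  rw [add_sub_cancel, div_rpow ha hb.le, div_le_iff₀ (by positivity)] at bernoulli
  rw [rpow_sub_one hb.ne']
  have : p * (b ^ p / b) * (b - a) = - (p * (a / b - 1)) * b ^ p := by field_simp; ring
  nlinarith

theorem mul_sum_Icc_rpow_sub_one_le {k p : ℝ} (hk : 0 < k) (hp₀ : 0 < p) (hp₁ : p ≤ 1) (n : ℕ) :
    k * ∑ m ∈ Icc 1 n, ((m : ℝ) * k) ^ (p - 1) ≤ ((n : ℝ) * k) ^ p / p := by
  induction n with
  | zero => simp [zero_rpow hp₀.ne']
  | succ n ih =>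
    have step := mul_rpow_sub_one_mul_sub_le_rpow_sub_rpow (a := n * k) (b := (n + 1 : ℕ) * k)
      (by positivity) (by positivity) hp₀.le hp₁
    rw [sum_Icc_succ_top (by omega), mul_add]
    rw [le_div_iff₀ hp₀] at ih ⊢
    push_cast at step ⊢
    nlinarith

theorem rpow_sub_one_le_two_mul_rpow_sub_one {a s p : ℝ} (hs : 0 < s) (hsa : s ≤ 2 * a)
    (hp₀ : 0 ≤ p) (hp₁ : p ≤ 1) : a ^ (p - 1) ≤ 2 * s ^ (p - 1) :=
  calc a ^ (p - 1) ≤ (s / 2) ^ (p - 1) :=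
        rpow_le_rpow_of_nonpos (by positivity) (by linarith) (by linarith)
    _ = s ^ (p - 1) / 2 ^ (p - 1) := div_rpow hs.le zero_le_two _
    _ ≤ s ^ (p - 1) / 2 ^ (-1 : ℝ) := by
        gcongr
        · exact one_le_two
        · linarith
    _ = 2 * s ^ (p - 1) := by rw [rpow_neg_one]; field_simp

theorem rpow_sub_one_mul_rpow_sub_one_le {a b α γ : ℝ} (ha : 0 < a) (hb : 0 < b)
    (hα₀ : 0 ≤ α) (hα₁ : α ≤ 1) (hγ₀ : 0 ≤ γ) (hγ₁ : γ ≤ 1) :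
    b ^ (γ - 1) * a ^ (α - 1) ≤
      2 * ((a + b) ^ (α - 1) * b ^ (γ - 1) + (a + b) ^ (γ - 1) * a ^ (α - 1)) := by
  have hab : 0 < a + b := by positivity
  have := rpow_pos_of_pos ha (α - 1)
  have := rpow_pos_of_pos hb (γ - 1)
  have := rpow_pos_of_pos hab (α - 1)
  have := rpow_pos_of_pos hab (γ - 1)
  rcases le_total b a with hba | hab'
  · have := rpow_sub_one_le_two_mul_rpow_sub_one hab (by linarith) hα₀ hα₁ (a := a)
    nlinarith
  · have := rpow_sub_one_le_two_mul_rpow_sub_one hab (by linarith) hγ₀ hγ₁ (a := b)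
    nlinarith

theorem mul_sum_Ico_rpow_mul_rpow_le {k α γ : ℝ} (hk : 0 < k) (hα₀ : 0 < α) (hα₁ : α ≤ 1)
    (hγ₀ : 0 < γ) (hγ₁ : γ ≤ 1) (n : ℕ) :
    k * ∑ j ∈ Ico 1 n, (((n - j : ℕ) : ℝ) * k) ^ (γ - 1) * ((j : ℝ) * k) ^ (α - 1) ≤
      2 * (1 / α + 1 / γ) * ((n : ℝ) * k) ^ (α + γ - 1) := by
  rcases n.eq_zero_or_pos with rfl | hn
  · rw [Ico_eq_empty (by omega), sum_empty, mul_zero]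
    positivity
  set t := (n : ℝ) * k
  have ht : 0 < t := by positivity
  have split : ∀ j ∈ Ico 1 n, (((n - j : ℕ) : ℝ) * k) ^ (γ - 1) * ((j : ℝ) * k) ^ (α - 1) ≤
      2 * t ^ (α - 1) * (((n - j : ℕ) : ℝ) * k) ^ (γ - 1) +
        2 * t ^ (γ - 1) * ((j : ℝ) * k) ^ (α - 1) := by
    intro j hj
    obtain ⟨hj₁, hjn⟩ := mem_Ico.mp hj
    have hnj : 0 < n - j := by omega
    have hsum : (j : ℝ) * k + ((n - j : ℕ) : ℝ) * k = t := by
      rw [Nat.cast_sub hjn.le]; ring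
    have := rpow_sub_one_mul_rpow_sub_one_le (a := j * k) (b := ((n - j : ℕ) : ℝ) * k)
      (by positivity) (by positivity) hα₀.le hα₁ hγ₀.le hγ₁
    rw [hsum] at this
    linarith
  have partial_sum :
      ∀ p, 0 < p → p ≤ 1 → k * ∑ j ∈ Ico 1 n, ((j : ℝ) * k) ^ (p - 1) ≤ t ^ p / p :=
    fun p hp₀ hp₁ => le_trans
      (mul_le_mul_of_nonneg_left
        (sum_le_sum_of_subset_of_nonneg Ico_subset_Icc_self fun _ _ _ => by positivity) hk.le)
      (mul_sum_Icc_rpow_sub_one_le hk hp₀ hp₁ n)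
  have reflect : ∑ j ∈ Ico 1 n, (((n - j : ℕ) : ℝ) * k) ^ (γ - 1) =
      ∑ j ∈ Ico 1 n, ((j : ℝ) * k) ^ (γ - 1) := by
    rw [sum_Ico_reflect (fun m => ((m : ℝ) * k) ^ (γ - 1)) 1 (Nat.le_succ n)]
    simp
  calc k * ∑ j ∈ Ico 1 n, (((n - j : ℕ) : ℝ) * k) ^ (γ - 1) * ((j : ℝ) * k) ^ (α - 1)
      ≤ 2 * t ^ (α - 1) * (k * ∑ j ∈ Ico 1 n, ((j : ℝ) * k) ^ (γ - 1)) +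
          2 * t ^ (γ - 1) * (k * ∑ j ∈ Ico 1 n, ((j : ℝ) * k) ^ (α - 1)) := by
        rw [← reflect, mul_sum, mul_sum, mul_sum, mul_sum, mul_sum, ← sum_add_distrib]
        gcongr with j hj
        linear_combination k * split j hj
    _ ≤ 2 * t ^ (α - 1) * (t ^ γ / γ) + 2 * t ^ (γ - 1) * (t ^ α / α) := by
        gcongr
        exacts [partial_sum γ hγ₀ hγ₁, partial_sum α hα₀ hα₁]
    _ = 2 / γ * (t ^ (α - 1) * t ^ γ) + 2 / α * (t ^ (γ - 1) * t ^ α) := by ring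
    _ = 2 * (1 / α + 1 / γ) * t ^ (α + γ - 1) := by
        rw [← rpow_add ht, ← rpow_add ht]
        ring_nf

theorem mul_sum_Ico_rpow_div_exp_le {k ℓ α γ δ : ℝ} (hk : 0 < k) (hℓ : 0 < ℓ)
    (hα₀ : 0 < α) (hα₁ : α ≤ 1) (hγ₀ : 0 < γ) (hγ₁ : γ ≤ 1) (hδ₀ : 0 ≤ δ) (hδ₁ : δ ≤ 1) (n : ℕ) :
    k * ∑ j ∈ Ico 1 n, (((n - j : ℕ) : ℝ) * k) ^ (γ + δ - 1) * ((j : ℝ) * k) ^ (α - 1) /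
        exp (ℓ * (((n - j : ℕ) : ℝ) * k)) ≤
      ℓ ^ (-δ) * (2 * (1 / α + 1 / γ) * ((n : ℝ) * k) ^ (α + γ - 1)) := by
  have decay : ∀ j ∈ Ico 1 n,
      (((n - j : ℕ) : ℝ) * k) ^ (γ + δ - 1) / exp (ℓ * (((n - j : ℕ) : ℝ) * k)) ≤
        ℓ ^ (-δ) * (((n - j : ℕ) : ℝ) * k) ^ (γ - 1) := by
    intro j hj
    have hnj : 0 < n - j := by have := mem_Ico.mp hj; omega
    have := rpow_div_exp_mul_le (p := γ + δ - 1) (t := ((n - j : ℕ) : ℝ) * k) (by positivity)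
      hℓ hδ₀ hδ₁
    rwa [show γ + δ - 1 - δ = γ - 1 by ring] at this
  calc k * ∑ j ∈ Ico 1 n, (((n - j : ℕ) : ℝ) * k) ^ (γ + δ - 1) * ((j : ℝ) * k) ^ (α - 1) /
        exp (ℓ * (((n - j : ℕ) : ℝ) * k))
      ≤ k * ∑ j ∈ Ico 1 n,
          ℓ ^ (-δ) * ((((n - j : ℕ) : ℝ) * k) ^ (γ - 1) * ((j : ℝ) * k) ^ (α - 1)) := by
        refine mul_le_mul_of_nonneg_left (sum_le_sum fun j hj => ?_) hk.le
        calc _ = (((n - j : ℕ) : ℝ) * k) ^ (γ + δ - 1) / exp (ℓ * (((n - j : ℕ) : ℝ) * k)) *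
              ((j : ℝ) * k) ^ (α - 1) := by ring
          _ ≤ ℓ ^ (-δ) * (((n - j : ℕ) : ℝ) * k) ^ (γ - 1) * ((j : ℝ) * k) ^ (α - 1) :=
              mul_le_mul_of_nonneg_right (decay j hj) (by positivity)
          _ = _ := by ring
    _ = ℓ ^ (-δ) * (k * ∑ j ∈ Ico 1 n,
          (((n - j : ℕ) : ℝ) * k) ^ (γ - 1) * ((j : ℝ) * k) ^ (α - 1)) := by
        rw [← mul_sum]; ring
    _ ≤ _ := mul_le_mul_of_nonneg_left (mul_sum_Ico_rpow_mul_rpow_le hk hα₀ hα₁ hγ₀ hγ₁ n)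
        (by positivity)

theorem rpow_min_one_sub_one_le_one_add_rpow {t : ℝ} (ht : 0 ≤ t) (μ : ℝ) :
    t ^ (min μ 1 - 1) ≤ 1 + t ^ (μ - 1) := by
  rcases le_total μ 1 with hμ | hμ
  · rw [min_eq_left hμ]
    linarith
  · rw [min_eq_right hμ, sub_self, rpow_zero]
    linarith [rpow_nonneg ht (μ - 1)]

/- On `(0, T]`, `t ^ (ν - 1) ≲ t ^ (β - 1)` and `1 + t ^ (μ - 1) ≍ t ^ (α - 1)` with
`α = min μ 1`, `β = min ν 1`, which reduces the estimate to exponents in `(0, 1]`. -/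
theorem exists_mul_sum_Ico_div_exp_le_rpow_neg {T μ ν : ℝ} (hT : 0 < T) (hμ : 0 < μ)
    (hν : 0 < ν) :
    ∃ C, ∀ ℓ > 0, ∀ k > 0, ∀ n : ℕ, 0 < n → n * k ≤ T →
      k * ∑ j ∈ Ico 1 n, (((n - j : ℕ) : ℝ) * k) ^ (ν - 1) * (1 + ((j : ℝ) * k) ^ (μ - 1)) /
          exp (ℓ * (((n - j : ℕ) : ℝ) * k)) ≤
        C * ℓ ^ (-(min ν 1 / 2)) * (1 + ((n : ℝ) * k) ^ (μ - 1)) := by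
  set α := min μ 1
  set β := min ν 1
  have hα₀ : 0 < α := lt_min hμ one_pos
  have hβ₀ : 0 < β := lt_min hν one_pos
  have hα₁ : α ≤ 1 := min_le_right μ 1
  have hβ₁ : β ≤ 1 := min_le_right ν 1
  set cν := T ^ (ν - β)
  set cμ := T ^ (1 - α) + T ^ (μ - α)
  refine ⟨cν * cμ * (2 * (1 / α + 1 / (β / 2))) * T ^ (β / 2), fun ℓ hℓ k hk n hn hnT => ?_⟩
  have ht : 0 < (n : ℝ) * k := by positivity
  have weight_le :
      ∀ j ∈ Ico 1 n, 1 + ((j : ℝ) * k) ^ (μ - 1) ≤ cμ * ((j : ℝ) * k) ^ (α - 1) := by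
    intro j hj
    have hj₀ : 0 < (j : ℝ) * k := by have := (mem_Ico.mp hj).1; positivity
    have hjT : (j : ℝ) * k ≤ T := le_trans (by gcongr; exact (mem_Ico.mp hj).2.le) hnT
    have h₀ := rpow_le_rpow_sub_mul_rpow (p := α - 1) (q := 0) hj₀ hjT (by linarith)
    have h₁ := rpow_le_rpow_sub_mul_rpow (p := α - 1) (q := μ - 1) hj₀ hjT
      (by linarith [min_le_left μ 1])
    rw [rpow_zero, show (0 : ℝ) - (α - 1) = 1 - α by ring] at h₀
    rw [show μ - 1 - (α - 1) = μ - α by ring] at h₁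
    linarith
  have kernel_le : ∀ j ∈ Ico 1 n,
      (((n - j : ℕ) : ℝ) * k) ^ (ν - 1) ≤ cν * (((n - j : ℕ) : ℝ) * k) ^ (β / 2 + β / 2 - 1) := by
    intro j hj
    have hnj : 0 < n - j := by have := mem_Ico.mp hj; omega
    have hnjT : ((n - j : ℕ) : ℝ) * k ≤ T := le_trans (by gcongr; omega) hnT
    rw [add_halves, show cν = T ^ (ν - 1 - (β - 1)) by rw [sub_sub_sub_cancel_right]]
    exact rpow_le_rpow_sub_mul_rpow (by positivity) hnjT (by linarith [min_le_left ν 1])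
  have time_le :
      ((n : ℝ) * k) ^ (α + β / 2 - 1) ≤ T ^ (β / 2) * (1 + ((n : ℝ) * k) ^ (μ - 1)) := by
    have := rpow_le_rpow_sub_mul_rpow (p := α - 1) (q := α + β / 2 - 1) ht hnT (by linarith)
    rw [show α + β / 2 - 1 - (α - 1) = β / 2 by ring] at this
    exact this.trans (by gcongr; exact rpow_min_one_sub_one_le_one_add_rpow ht.le μ)
  calc k * ∑ j ∈ Ico 1 n, (((n - j : ℕ) : ℝ) * k) ^ (ν - 1) * (1 + ((j : ℝ) * k) ^ (μ - 1)) /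
          exp (ℓ * (((n - j : ℕ) : ℝ) * k))
      ≤ k * ∑ j ∈ Ico 1 n, cν * cμ * ((((n - j : ℕ) : ℝ) * k) ^ (β / 2 + β / 2 - 1) *
          ((j : ℝ) * k) ^ (α - 1) / exp (ℓ * (((n - j : ℕ) : ℝ) * k))) := by
        refine mul_le_mul_of_nonneg_left (sum_le_sum fun j hj => ?_) hk.le
        calc _ ≤ cν * (((n - j : ℕ) : ℝ) * k) ^ (β / 2 + β / 2 - 1) *
              (cμ * ((j : ℝ) * k) ^ (α - 1)) / exp (ℓ * (((n - j : ℕ) : ℝ) * k)) := by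
              gcongr ?_ * ?_ / _
              exacts [kernel_le j hj, weight_le j hj]
          _ = _ := by ring
    _ = cν * cμ * (k * ∑ j ∈ Ico 1 n, (((n - j : ℕ) : ℝ) * k) ^ (β / 2 + β / 2 - 1) *
          ((j : ℝ) * k) ^ (α - 1) / exp (ℓ * (((n - j : ℕ) : ℝ) * k))) := by
        rw [← mul_sum]; ring
    _ ≤ cν * cμ * (ℓ ^ (-(β / 2)) * (2 * (1 / α + 1 / (β / 2)) *
          ((n : ℝ) * k) ^ (α + β / 2 - 1))) :=
        mul_le_mul_of_nonneg_left (mul_sum_Ico_rpow_div_exp_le hk hℓ hα₀ hα₁ (by positivity)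
          (by linarith) (by positivity) (by linarith) n) (by positivity)
    _ ≤ cν * cμ * (ℓ ^ (-(β / 2)) * (2 * (1 / α + 1 / (β / 2)) *
          (T ^ (β / 2) * (1 + ((n : ℝ) * k) ^ (μ - 1))))) := by
        gcongr
    _ = _ := by ring

theorem exists_pos_mul_sum_Ico_div_exp_le_mul {T μ ν ε : ℝ} (hT : 0 < T) (hμ : 0 < μ)
    (hν : 0 < ν) (hε : 0 < ε) :
    ∃ ℓ > 0, ∀ k > 0, ∀ n : ℕ, 0 < n → n * k ≤ T →
      k * ∑ j ∈ Ico 1 n, (((n - j : ℕ) : ℝ) * k) ^ (ν - 1) * (1 + ((j : ℝ) * k) ^ (μ - 1)) /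
          exp (ℓ * (((n - j : ℕ) : ℝ) * k)) ≤
        ε * (1 + ((n : ℝ) * k) ^ (μ - 1)) := by
  obtain ⟨C, hC⟩ := exists_mul_sum_Ico_div_exp_le_rpow_neg hT hμ hν
  have decay : Filter.Tendsto (fun ℓ : ℝ => C * ℓ ^ (-(min ν 1 / 2))) Filter.atTop (nhds 0) := by
    simpa using (tendsto_rpow_neg_atTop (by positivity)).const_mul C
  obtain ⟨ℓ, hℓε, hℓ⟩ :=
    ((decay.eventually (gt_mem_nhds hε)).and (Filter.eventually_gt_atTop 0)).exists
  refine ⟨ℓ, hℓ, fun k hk n hn hnT => (hC ℓ hℓ k hk n hn hnT).trans ?_⟩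
  have : 0 ≤ 1 + ((n : ℝ) * k) ^ (μ - 1) := by positivity
  gcongr

theorem le_two_mul_pow_mul_of_le_add_mul_sum {N : ℕ} {φ w κ : ℕ → ℝ} {A B r : ℝ} (hA : 0 ≤ A)
    (hB : 0 ≤ B) (hr : 1 ≤ r) (hw : ∀ n, 0 ≤ w n) (hκ : ∀ m, 0 ≤ κ m)
    (hwκ : ∀ n, 1 ≤ n → n ≤ N → B * ∑ j ∈ Ico 1 n, κ (n - j) * w j / r ^ (n - j) ≤ w n / 2)
    (hφ : ∀ n, 1 ≤ n → n ≤ N → φ n ≤ A * w n + B * ∑ j ∈ Ico 1 n, κ (n - j) * φ j) :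
    ∀ n, 1 ≤ n → n ≤ N → φ n ≤ 2 * A * r ^ n * w n := by
  intro n
  induction n using Nat.strong_induction_on with
  | _ n ih =>
  intro hn hnN
  have hr₀ : 0 < r := by linarith
  have previous : ∀ j ∈ Ico 1 n,
      κ (n - j) * φ j ≤ 2 * A * r ^ n * (κ (n - j) * w j / r ^ (n - j)) := by
    intro j hj
    obtain ⟨hj₁, hjn⟩ := mem_Ico.mp hj
    have hpow : r ^ n = r ^ j * r ^ (n - j) := by rw [← pow_add, Nat.add_sub_cancel' hjn.le]
    calc κ (n - j) * φ j ≤ κ (n - j) * (2 * A * r ^ j * w j) :=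
          mul_le_mul_of_nonneg_left (ih j hjn hj₁ (hjn.le.trans hnN)) (hκ _)
      _ = _ := by rw [hpow]; field_simp
  calc φ n ≤ A * w n + B * ∑ j ∈ Ico 1 n, κ (n - j) * φ j := hφ n hn hnN
    _ ≤ A * w n + 2 * A * r ^ n * (B * ∑ j ∈ Ico 1 n, κ (n - j) * w j / r ^ (n - j)) := by
        rw [mul_left_comm _ B, mul_sum (Ico 1 n) _ (2 * A * r ^ n)]
        exact add_le_add_right (mul_le_mul_of_nonneg_left (sum_le_sum previous) hB) _
    _ ≤ A * w n + 2 * A * r ^ n * (w n / 2) := by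
        gcongr
        exact hwκ n hn hnN
    _ ≤ 2 * A * r ^ n * w n := by
        nlinarith [mul_le_mul_of_nonneg_left (one_le_pow₀ hr (n := n)) (mul_nonneg hA (hw n))]

/-- Discrete Gronwall lemma with weakly singular kernel. -/
theorem discrete_gronwall_singular
    (T μ ν M₁ : ℝ) (hT : 0 < T) (hμ : 0 < μ) (hν : 0 < ν) (hM₁ : 0 ≤ M₁) :
    ∃ M₂ : ℝ, ∀ (N : ℕ), 0 < N → ∀ (M₀ : ℝ), 0 ≤ M₀ → ∀ (φ : ℕ → ℝ),
      (∀ n, 1 ≤ n → n ≤ N → 0 ≤ φ n) →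
      (∀ n, 1 ≤ n → n ≤ N →
        φ n ≤ M₀ * (1 + ((n : ℝ) * (T / N)) ^ (-1 + μ))
              + M₁ * (T / N) *
                ∑ j ∈ Finset.Ico 1 n, (((n - j : ℕ) : ℝ) * (T / N)) ^ (-1 + ν) * φ j) →
      ∀ n, 1 ≤ n → n ≤ N → φ n ≤ M₀ * M₂ * (1 + ((n : ℝ) * (T / N)) ^ (-1 + μ)) := by
  simp only [neg_add_eq_sub]
  obtain ⟨ℓ, hℓ, hsmall⟩ :=
    exists_pos_mul_sum_Ico_div_exp_le_mul hT hμ hν (ε := 1 / (2 * (M₁ + 1))) (by positivity)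
  refine ⟨2 * exp (ℓ * T), fun N hN M₀ hM₀ φ _ hφ n hn hnN => ?_⟩
  set k := T / N
  have hk : 0 < k := div_pos hT (Nat.cast_pos.mpr hN)
  have time_le : ∀ m ≤ N, (m : ℝ) * k ≤ T := fun m hm => by
    rw [mul_div_assoc', div_le_iff₀ (Nat.cast_pos.mpr hN), mul_comm]
    gcongr
  have exp_pow : ∀ m : ℕ, exp (ℓ * k) ^ m = exp (ℓ * (m * k)) := fun m => by
    rw [← exp_nat_mul]; ring_nf
  have gronwall := le_two_mul_pow_mul_of_le_add_mul_sum
    (w := fun m => 1 + ((m : ℝ) * k) ^ (μ - 1)) (κ := fun m => ((m : ℝ) * k) ^ (ν - 1))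
    (r := exp (ℓ * k)) hM₀ (mul_nonneg hM₁ hk.le) (one_le_exp (by positivity))
    (fun m => by positivity) (fun m => by positivity) ?_ hφ n hn hnN
  · refine gronwall.trans ?_
    rw [exp_pow, mul_assoc 2 M₀, mul_left_comm 2 M₀]
    gcongr
    exact time_le n hnN
  · intro m hm hmN
    simp only [exp_pow, mul_assoc M₁ k]
    have hM₁ε : M₁ * (1 / (2 * (M₁ + 1))) ≤ 1 / 2 := by
      rw [mul_one_div, div_le_div_iff₀ (by positivity) two_pos]
      linarith
    have hw : 0 ≤ 1 + ((m : ℝ) * k) ^ (μ - 1) := by positivity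
    nlinarith [mul_le_mul_of_nonneg_left (hsmall k hk m hm (time_le m hmN)) hM₁,
      mul_le_mul_of_nonneg_right hM₁ε hw]
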